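/- Let H ∈ F₂^{m×n} have rank m over F₂ and be (δ,γ)-expanding; let β > 0, ω > 0, let ε satisfy 0 < ε < δγ/2, and let 0 < ξ < (δ − 2ε/γ)/2. Then every ξ-cluster Ω_j of Ω(ε) that is typical (i.e. p_G(Ω_j ∩ Ξ_ω(β)) ≥ p_G(Ω_j)/2) satisfies the Gibbs-weight bound p_G(Ω_j) ≤ 2^{1+m−n} · (1 + e^{−β})^{−m} · (Σ_{i=0}^{⌊2n(⟨ε⟩_β+ω)/γ⌋} binom(n,i)) · exp(−β(⟨E⟩_β − ωn)), where ⟨ε⟩_β = ⟨E⟩_β/n. -/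

import Mathlib

/-! Since `H` has full rank, each syndrome has `2^(n-m)` preimages, so `Z = 2^(n-m) (1 + e^{-β})^m`.
Expansion makes clusters small: along a path in `Ω(ε)` the distance to the starting point stays
below `2εn/γ`, since a step shorter than `ξn` keeps it inside the expansion radius `δn`, where
`γ · dist ≤ |H(u - v)| < 2εn` pulls it back. So the typical part of a cluster has diameter at most
`δn`, and as its syndromes weigh at most `⟨E⟩ + ωn`, expansion again puts it inside a Hamming ball
of radius `2(⟨E⟩ + ωn)/γ`. Each of its points has Gibbs weight at most `e^{-β(⟨E⟩ - ωn)}/Z`, and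
typicality costs the factor `2`. -/

open scoped Classical

/-- A binary matrix `H ∈ F₂^{m×n}` is `(δ,γ)`-expanding if every `x ∈ F₂ⁿ`
with Hamming weight `|x| ≤ δn` satisfies `|Hx| ≥ γ|x|`. -/
def IsExpanding {m n : ℕ} (H : Matrix (Fin m) (Fin n) (ZMod 2)) (δ γ : ℝ) : Prop :=
  ∀ x : Fin n → ZMod 2, (hammingNorm x : ℝ) ≤ δ * n →
    γ * (hammingNorm x : ℝ) ≤ (hammingNorm (H.mulVec x) : ℝ)

/-- `x ∼ y` on `Ω(ε) = {z : |Hz| < εn}`: there is a path `v₀ = x, …, v_ℓ = y`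
inside `Ω(ε)` whose consecutive members differ in fewer than `ξn` coordinates.
Its equivalence classes are the ξ-clusters of `Ω(ε)`. -/
def Connected {m n : ℕ} (H : Matrix (Fin m) (Fin n) (ZMod 2)) (ε ξ : ℝ)
    (x y : Fin n → ZMod 2) : Prop :=
  ∃ (ℓ : ℕ) (v : ℕ → Fin n → ZMod 2), v 0 = x ∧ v ℓ = y ∧
    (∀ i ≤ ℓ, (hammingNorm (H.mulVec (v i)) : ℝ) < ε * n) ∧
    (∀ i < ℓ, (hammingNorm (v i + v (i + 1)) : ℝ) < ξ * n)

open Finset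

theorem hammingDist_eq_hammingNorm_sub {ι R : Type*} [Fintype ι] [AddCommGroup R] [DecidableEq R]
    (u v : ι → R) : hammingDist u v = hammingNorm (u - v) := by
  rw [hammingDist_comm, hammingDist_eq_hammingNorm, neg_add_eq_sub]

theorem hammingNorm_add_eq_hammingDist {ι : Type*} [Fintype ι] (u v : ι → ZMod 2) :
    hammingNorm (u + v) = hammingDist u v := by
  rw [hammingDist_eq_hammingNorm_sub, ZModModule.sub_eq_add]

theorem sum_pow_hammingNorm {ι R : Type*} [Fintype ι] [DecidableEq ι] [CommSemiring R] (r : R) :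
    ∑ y : ι → ZMod 2, r ^ hammingNorm y = (1 + r) ^ Fintype.card ι := by
  have hcoord : ∀ y : ι → ZMod 2, r ^ hammingNorm y = ∏ i, if y i = 0 then 1 else r := by
    intro y
    rw [prod_ite, prod_const_one, one_mul, prod_const, hammingNorm]
  have hsum : ∑ a : ZMod 2, (if a = 0 then 1 else r) = 1 + r := Fin.sum_univ_two _
  simp_rw [hcoord]
  rw [← Fintype.prod_sum (fun _ a => if a = 0 then 1 else r), hsum, prod_const, card_univ]

theorem card_hammingNorm_le_le_sum_choose {ι : Type*} [Fintype ι] [DecidableEq ι] (r : ℕ) :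
    #{z : ι → ZMod 2 | hammingNorm z ≤ r} ≤ ∑ i ∈ range (r + 1), (Fintype.card ι).choose i := by
  let indicator : Finset ι → ι → ZMod 2 := fun s i => if i ∈ s then 1 else 0
  have hsub : ({z | hammingNorm z ≤ r} : Finset (ι → ZMod 2)) ⊆
      ((range (r + 1)).biUnion fun i => powersetCard i univ).image indicator := by
    intro z hz
    refine mem_image.2 ⟨({i | z i ≠ 0} : Finset ι), ?_, funext fun i => ?_⟩
    · exact mem_biUnion.2 ⟨hammingNorm z, mem_range_succ_iff.2 (mem_filter.1 hz).2,
        mem_powersetCard_univ.2 rfl⟩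
    · have hbit : ∀ a : ZMod 2, (if a ≠ 0 then 1 else 0) = a := by decide
      simp [indicator, hbit]
  calc _ ≤ _ := card_le_card hsub
    _ ≤ _ := card_image_le
    _ ≤ _ := card_biUnion_le
    _ = _ := by simp only [card_powersetCard, card_univ]

theorem AddMonoidHom.card_nsmul_sum_comp_of_surjective {G M R : Type*} [AddGroup G] [Fintype G]
    [AddMonoid M] [Fintype M] [DecidableEq M] [AddCommMonoid R] (f : G →+ M)
    (hf : Function.Surjective f) (φ : M → R) :
    Fintype.card M • ∑ g, φ (f g) = Fintype.card G • ∑ y, φ y := by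
  have hfiber : ∀ y, #{g | f g = y} = #{g | f g = 0} := fun y =>
    AddMonoidHom.card_fiber_eq_of_mem_range f (hf y) ⟨0, map_zero f⟩
  have hsum : ∑ g, φ (f g) = #{g | f g = 0} • ∑ y, φ y := by
    simp only [sum_comp, image_univ_of_surjective hf, hfiber, smul_sum]
  have hcard : Fintype.card G = Fintype.card M * #{g | f g = 0} := by
    rw [← card_univ, card_eq_sum_card_fiberwise (t := univ) (f := f) (fun _ _ => mem_univ _)]
    simp only [hfiber, sum_const, card_univ, smul_eq_mul]
  rw [hsum, hcard, smul_smul, mul_comm]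

theorem Matrix.mulVec_surjective_of_rank_eq {m n : ℕ} {K : Type*} [Field K]
    {H : Matrix (Fin m) (Fin n) K} (hrank : H.rank = m) : Function.Surjective H.mulVec :=
  LinearMap.range_eq_top.1 <| Submodule.eq_top_of_finrank_eq <|
    hrank.trans (Module.finrank_fin_fun K).symm

theorem sum_exp_neg_mul_hammingNorm_mulVec {m n : ℕ} {H : Matrix (Fin m) (Fin n) (ZMod 2)}
    (hrank : H.rank = m) (β : ℝ) :
    ∑ u : Fin n → ZMod 2, Real.exp (-β * hammingNorm (H.mulVec u)) =
      2 ^ n / 2 ^ m * (1 + Real.exp (-β)) ^ m := by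
  have h := H.mulVecLin.toAddMonoidHom.card_nsmul_sum_comp_of_surjective
    (Matrix.mulVec_surjective_of_rank_eq hrank) fun y => Real.exp (-β * hammingNorm y)
  have hpow : ∀ y : Fin m → ZMod 2, Real.exp (-β * hammingNorm y) = Real.exp (-β) ^ hammingNorm y :=
    fun y => by rw [mul_comm, Real.exp_nat_mul]
  simp only [LinearMap.toAddMonoidHom_coe, Matrix.mulVecLin_apply, hpow, sum_pow_hammingNorm,
    Fintype.card_fun, ZMod.card, Fintype.card_fin, nsmul_eq_mul] at h
  push_cast at h
  rw [div_mul_eq_mul_div, eq_div_iff (by positivity), mul_comm]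
  simpa only [hpow] using h

theorem IsExpanding.mul_hammingDist_le {m n : ℕ} {H : Matrix (Fin m) (Fin n) (ZMod 2)} {δ γ : ℝ}
    (hexp : IsExpanding H δ γ) {u v : Fin n → ZMod 2} (huv : (hammingDist u v : ℝ) ≤ δ * n) :
    γ * hammingDist u v ≤ hammingNorm (H.mulVec u) + hammingNorm (H.mulVec v) := by
  rw [hammingDist_eq_hammingNorm_sub] at huv ⊢
  calc γ * hammingNorm (u - v) ≤ hammingNorm (H.mulVec (u - v)) := hexp _ huv
    _ = hammingDist (H.mulVec u) (H.mulVec v) := by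
      rw [Matrix.mulVec_sub, hammingDist_eq_hammingNorm_sub]
    _ ≤ hammingNorm (H.mulVec u) + hammingNorm (H.mulVec v) := by
      exact_mod_cast (hammingDist_triangle _ 0 _).trans_eq
        (by rw [hammingDist_zero_right, hammingDist_zero_left])

namespace Connected

variable {m n : ℕ} {H : Matrix (Fin m) (Fin n) (ZMod 2)} {ε ξ : ℝ} {x y z : Fin n → ZMod 2}

theorem symm (h : Connected H ε ξ x y) : Connected H ε ξ y x := by
  obtain ⟨ℓ, v, hv0, hvℓ, hΩ, hstep⟩ := h
  refine ⟨ℓ, fun i => v (ℓ - i), by simpa using hvℓ, by simpa using hv0,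
    fun i _ => hΩ _ (Nat.sub_le _ _), fun i hi => ?_⟩
  have hsucc : ℓ - i = ℓ - (i + 1) + 1 := by omega
  dsimp only
  rw [hsucc, add_comm (v _)]
  exact hstep _ (by omega)

theorem trans (hxy : Connected H ε ξ x y) (hyz : Connected H ε ξ y z) : Connected H ε ξ x z := by
  obtain ⟨k, v, hv0, hvk, hvΩ, hvstep⟩ := hxy
  obtain ⟨l, w, hw0, hwl, hwΩ, hwstep⟩ := hyz
  let u : ℕ → Fin n → ZMod 2 := fun i => if i ≤ k then v i else w (i - k)
  have hleft : ∀ i ≤ k, u i = v i := fun i hi => if_pos hi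
  have hright : ∀ i, k ≤ i → u i = w (i - k) := by
    intro i hi
    rcases hi.eq_or_lt with rfl | hlt
    · simp [u, hvk, hw0]
    · exact if_neg hlt.not_ge
  refine ⟨k + l, u, by rw [hleft 0 k.zero_le, hv0],
    by rw [hright _ le_self_add, add_tsub_cancel_left, hwl], fun i hi => ?_, fun i hi => ?_⟩
  · rcases le_total i k with hik | hki
    · rw [hleft i hik]; exact hvΩ i hik
    · rw [hright i hki]; exact hwΩ _ (by omega)
  · rcases lt_or_ge i k with hik | hki
    · rw [hleft i hik.le, hleft (i + 1) hik]; exact hvstep i hik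
    · rw [hright i hki, hright (i + 1) (by omega), Nat.sub_add_comm hki]
      exact hwstep _ (by omega)

theorem hammingDist_lt {δ γ : ℝ} (hγ : 0 < γ) (hexp : IsExpanding H δ γ)
    (hξ : ξ + 2 * ε / γ ≤ δ) (h : Connected H ε ξ x y) :
    (hammingDist x y : ℝ) < 2 * ε * n / γ := by
  obtain ⟨ℓ, v, rfl, rfl, hΩ, hstep⟩ := h
  have hΩ0 := hΩ 0 ℓ.zero_le
  have hεn : 0 < ε * n := (Nat.cast_nonneg _).trans_lt hΩ0
  have key : ∀ i ≤ ℓ, (hammingDist (v 0) (v i) : ℝ) < 2 * ε * n / γ := by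
    intro i
    induction i with
    | zero =>
      intro _
      rw [hammingDist_self, Nat.cast_zero]
      exact div_pos (by linarith) hγ
    | succ i ih =>
      intro hi
      have hstep' : (hammingDist (v i) (v (i + 1)) : ℝ) < ξ * n := by
        rw [← hammingNorm_add_eq_hammingDist]; exact hstep i hi
      have hnear : (hammingDist (v 0) (v (i + 1)) : ℝ) ≤ δ * n := calc
        _ ≤ (hammingDist (v 0) (v i) : ℝ) + hammingDist (v i) (v (i + 1)) := by
          exact_mod_cast hammingDist_triangle _ _ _
        _ ≤ ξ * n + 2 * ε * n / γ := by linarith [ih (by omega)]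
        _ = (ξ + 2 * ε / γ) * n := by ring
        _ ≤ δ * n := by gcongr
      rw [lt_div_iff₀ hγ, mul_comm]
      linarith [hexp.mul_hammingDist_le hnear, hΩ0, hΩ (i + 1) hi]
  exact key ℓ le_rfl

end Connected

theorem IsExpanding.card_le_sum_choose {m n : ℕ} {H : Matrix (Fin m) (Fin n) (ZMod 2)}
    {δ γ a : ℝ} (hγ : 0 < γ) (hexp : IsExpanding H δ γ) {S : Finset (Fin n → ZMod 2)}
    (hdiam : ∀ u ∈ S, ∀ v ∈ S, (hammingDist u v : ℝ) ≤ δ * n)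
    (hS : ∀ u ∈ S, (hammingNorm (H.mulVec u) : ℝ) ≤ a) :
    #S ≤ ∑ i ∈ range (⌊2 * a / γ⌋₊ + 1), n.choose i := by
  rcases S.eq_empty_or_nonempty with rfl | ⟨u₀, hu₀⟩
  · simp
  have hball : ∀ u ∈ S, u - u₀ ∈ ({z | hammingNorm z ≤ ⌊2 * a / γ⌋₊} : Finset _) := by
    intro u hu
    rw [mem_filter, ← hammingDist_eq_hammingNorm_sub]
    refine ⟨mem_univ _, Nat.le_floor ?_⟩
    rw [le_div_iff₀ hγ, mul_comm]
    linarith [hexp.mul_hammingDist_le (hdiam u hu u₀ hu₀), hS u hu, hS u₀ hu₀]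
  calc #S ≤ _ := card_le_card_of_injOn (· - u₀) hball fun u _ v _ h => sub_left_injective h
    _ ≤ _ := by simpa using card_hammingNorm_le_le_sum_choose (ι := Fin n) _

theorem typical_cluster_gibbs_weight_general {m n : ℕ} (H : Matrix (Fin m) (Fin n) (ZMod 2))
    (hrank : H.rank = m)
    (δ γ β ω ε ξ : ℝ) (hγ : 0 < γ) (hexp : IsExpanding H δ γ)
    (hβ : 0 < β)
    (hε : ε < δ * γ / 2)
    (hξ : ξ < (δ - 2 * ε / γ) / 2)
    (x : Fin n → ZMod 2) (hx : (hammingNorm (H.mulVec x) : ℝ) < ε * n) :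
    let Z : ℝ := ∑ u : Fin n → ZMod 2, Real.exp (-β * (hammingNorm (H.mulVec u) : ℝ))
    let pG : (Fin n → ZMod 2) → ℝ := fun u =>
      Real.exp (-β * (hammingNorm (H.mulVec u) : ℝ)) / Z
    let Eavg : ℝ := ∑ u : Fin n → ZMod 2, pG u * (hammingNorm (H.mulVec u) : ℝ)
    let Ξ : Finset (Fin n → ZMod 2) := Finset.univ.filter
      (fun u : Fin n → ZMod 2 => |(hammingNorm (H.mulVec u) : ℝ) - Eavg| ≤ ω * n)
    let C : Finset (Fin n → ZMod 2) := Finset.univ.filter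
      (fun y : Fin n → ZMod 2 => Connected H ε ξ x y)
    (∑ u ∈ C ∩ Ξ, pG u) ≥ (∑ u ∈ C, pG u) / 2 →
    ∑ u ∈ C, pG u ≤
      2 * (2 : ℝ) ^ m / 2 ^ n * ((1 + Real.exp (-β)) ^ m)⁻¹ *
        (∑ i ∈ Finset.range (⌊2 * (n : ℝ) * (Eavg / n + ω) / γ⌋₊ + 1),
          (Nat.choose n i : ℝ)) *
        Real.exp (-β * (Eavg - ω * n)) := by
  intro Z pG Eavg Ξ C htypical
  have hn : (n : ℝ) ≠ 0 := by
    rintro hn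
    rw [hn, mul_zero] at hx
    exact (Nat.cast_nonneg _).not_gt hx
  have hZ : Z = 2 ^ n / 2 ^ m * (1 + Real.exp (-β)) ^ m :=
    sum_exp_neg_mul_hammingNorm_mulVec hrank β
  have hZpos : 0 < Z := by rw [hZ]; positivity
  have hshell : ∀ u ∈ Ξ, |(hammingNorm (H.mulVec u) : ℝ) - Eavg| ≤ ω * n :=
    fun u hu => (mem_filter.1 hu).2
  have hweight : ∀ u ∈ Ξ, pG u ≤ Real.exp (-β * (Eavg - ω * n)) / Z := fun u hu =>
    div_le_div_of_nonneg_right (Real.exp_le_exp.2 <| by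
      nlinarith [(abs_le.1 (hshell u hu)).1]) hZpos.le
  have hradius : 2 * ε / γ < δ := by rw [div_lt_iff₀ hγ]; linarith
  have hdiam : ∀ u ∈ C ∩ Ξ, ∀ v ∈ C ∩ Ξ, (hammingDist u v : ℝ) ≤ δ * n := by
    intro u hu v hv
    have huv := (mem_filter.1 (mem_inter.1 hu).1).2.symm.trans (mem_filter.1 (mem_inter.1 hv).1).2
    have hlt := huv.hammingDist_lt hγ hexp (by linarith)
    have hδn : 2 * ε * n / γ ≤ δ * n := by
      rw [mul_div_right_comm]; gcongr
    linarith
  have hcard := hexp.card_le_sum_choose (a := Eavg + ω * n) hγ hdiam fun u hu => by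
    linarith [(abs_le.1 (hshell u (mem_inter.1 hu).2)).2]
  rw [show 2 * (Eavg + ω * n) / γ = 2 * n * (Eavg / n + ω) / γ by field_simp] at hcard
  calc ∑ u ∈ C, pG u ≤ 2 * ∑ u ∈ C ∩ Ξ, pG u := by linarith
    _ ≤ 2 * (#(C ∩ Ξ) * (Real.exp (-β * (Eavg - ω * n)) / Z)) := by
      gcongr
      exact (sum_le_card_nsmul _ _ _ fun u hu => hweight u (mem_inter.1 hu).2).trans_eq
        (nsmul_eq_mul _ _)
    _ ≤ 2 * ((∑ i ∈ range (⌊2 * n * (Eavg / n + ω) / γ⌋₊ + 1), (n.choose i : ℝ)) *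
        (Real.exp (-β * (Eavg - ω * n)) / Z)) := by
      gcongr
      exact_mod_cast hcard
    _ = _ := by rw [hZ]; field_simp

/-- for `H` of full rank `m` that is `(δ,γ)`-expanding, with
`β, ω > 0`, `0 < ε < δγ/2` and `0 < ξ < (δ − 2ε/γ)/2`, every typical ξ-cluster
`Ω_j` of `Ω(ε)` satisfies
`p_G(Ω_j) ≤ 2^{1+m−n}·(1+e^{−β})^{−m}·(Σ_{i=0}^{⌊2n(⟨ε⟩_β+ω)/γ⌋} C(n,i))·exp(−β(⟨E⟩_β − ωn))`. -/
theorem typical_cluster_gibbs_weight {m n : ℕ} (H : Matrix (Fin m) (Fin n) (ZMod 2))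
    (hrank : H.rank = m)
    (δ γ β ω ε ξ : ℝ) (hδ : 0 < δ) (hγ : 0 < γ) (hexp : IsExpanding H δ γ)
    (hβ : 0 < β) (hω : 0 < ω)
    (hε0 : 0 < ε) (hε : ε < δ * γ / 2)
    (hξ0 : 0 < ξ) (hξ : ξ < (δ - 2 * ε / γ) / 2)
    (x : Fin n → ZMod 2) (hx : (hammingNorm (H.mulVec x) : ℝ) < ε * n) :
    let Z : ℝ := ∑ u : Fin n → ZMod 2, Real.exp (-β * (hammingNorm (H.mulVec u) : ℝ))
    let pG : (Fin n → ZMod 2) → ℝ := fun u =>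
      Real.exp (-β * (hammingNorm (H.mulVec u) : ℝ)) / Z
    let Eavg : ℝ := ∑ u : Fin n → ZMod 2, pG u * (hammingNorm (H.mulVec u) : ℝ)
    let Ξ : Finset (Fin n → ZMod 2) := Finset.univ.filter
      (fun u : Fin n → ZMod 2 => |(hammingNorm (H.mulVec u) : ℝ) - Eavg| ≤ ω * n)
    let C : Finset (Fin n → ZMod 2) := Finset.univ.filter
      (fun y : Fin n → ZMod 2 => Connected H ε ξ x y)
    (∑ u ∈ C ∩ Ξ, pG u) ≥ (∑ u ∈ C, pG u) / 2 →
    ∑ u ∈ C, pG u ≤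
      2 * (2 : ℝ) ^ m / 2 ^ n * ((1 + Real.exp (-β)) ^ m)⁻¹ *
        (∑ i ∈ Finset.range (⌊2 * (n : ℝ) * (Eavg / n + ω) / γ⌋₊ + 1),
          (Nat.choose n i : ℝ)) *
        Real.exp (-β * (Eavg - ω * n)) :=
  typical_cluster_gibbs_weight_general H hrank δ γ β ω ε ξ hγ hexp hβ hε hξ x hx
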